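/- arXiv:1907.04776 — 2 statements merged into one kernel-verified Lean document; each statement's English description precedes it below -/
import Mathlib

section
/- Let ν be a string-monotonic function and G a finite prefix-free set of finite binary strings. Then for every N ∈ ℕ, |G^N_ν|·2^{-N} ≤ μ(S_G). -/
open scoped Classical

/-- The first `n` bits of an infinite binary sequence, as a finite string. -/
def firstN (α : ℕ → Bool) (n : ℕ) : List Bool := List.ofFn fun i : Fin n => α i

/-- The set of infinite binary sequences extending the finite string `x`. -/
def cylSet (x : List Bool) : Set (ℕ → Bool) := {α | ∀ i : Fin x.length, α i = x.get i}

/-- A set of finite binary strings is prefix-free if no element is a proper prefix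
of another element. -/
def PrefixFree (A : Set (List Bool)) : Prop :=
  ∀ x ∈ A, ∀ y ∈ A, x <+: y → x = y

/-- A function on finite binary strings is string-monotonic if it is total computable
and monotone with respect to the prefix relation. -/
def StringMonotonic (ν : List Bool → List Bool) : Prop :=
  Computable ν ∧ ∀ x y : List Bool, ν x <+: ν (x ++ y)

/-- `S_G`: sequences α such that some prefix of α is mapped by ν to a string
with a prefix in `G`. -/
def SG (ν : List Bool → List Bool) (G : Finset (List Bool)) : Set (ℕ → Bool) :=
  {α | ∃ n : ℕ, ∃ x ∈ G, x <+: ν (firstN α n)}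

/-- `G^N_ν`: strings of length `N` whose ν-image has a prefix in `G`. -/
noncomputable def GN (ν : List Bool → List Bool) (G : Finset (List Bool)) (N : ℕ) :
    Finset (List Bool) :=
  ((Finset.univ : Finset (Fin N → Bool)).image fun f => List.ofFn f).filter
    fun y => ∃ x ∈ G, x <+: ν y

open MeasureTheory

/-! Each `y ∈ G^N_ν` has its whole cylinder inside `S_G` (take `n = |y| = N`). Cylinders of
strings of one fixed length are pairwise disjoint and each has measure `2^{-N}`, so their union,
of measure `|G^N_ν| · 2^{-N}`, lies in `S_G`. -/

lemma measurableSet_cylSet (x : List Bool) : MeasurableSet (cylSet x) := by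
  have h : cylSet x = ⋂ i : Fin x.length, (fun α : ℕ → Bool => α i) ⁻¹' {x.get i} := by
    ext α; simp [cylSet]
  rw [h]
  exact .iInter fun i => measurable_pi_apply (i : ℕ) (measurableSet_singleton _)

lemma firstN_length_eq_of_mem_cylSet {y : List Bool} {α : ℕ → Bool} (hα : α ∈ cylSet y) :
    firstN α y.length = y :=
  List.ext_get (by simp [firstN]) fun i _ h => by simpa [firstN] using hα ⟨i, h⟩

lemma pairwiseDisjoint_cylSet_of_length_eq {A : Set (List Bool)} {N : ℕ}
    (hA : ∀ y ∈ A, y.length = N) : A.PairwiseDisjoint cylSet := by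
  intro y hy z hz hne
  refine Set.disjoint_left.mpr fun α hαy hαz => hne ?_
  rw [← firstN_length_eq_of_mem_cylSet hαy, ← firstN_length_eq_of_mem_cylSet hαz, hA y hy,
    hA z hz]

lemma card_mul_le_measure_of_cylSet_subset (μ : Measure (ℕ → Bool))
    (hμ : ∀ x : List Bool, μ (cylSet x) = (2 : ENNReal) ^ (-(x.length : ℤ)))
    {A : Finset (List Bool)} {N : ℕ} (hA : ∀ y ∈ A, y.length = N) {S : Set (ℕ → Bool)}
    (hS : ∀ y ∈ A, cylSet y ⊆ S) :
    (A.card : ENNReal) * (2 : ENNReal) ^ (-(N : ℤ)) ≤ μ S :=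
  calc (A.card : ENNReal) * (2 : ENNReal) ^ (-(N : ℤ))
      = ∑ y ∈ A, μ (cylSet y) := by
        rw [Finset.sum_congr rfl fun y hy => by rw [hμ, hA y hy], Finset.sum_const, nsmul_eq_mul]
    _ = μ (⋃ y ∈ A, cylSet y) :=
        (measure_biUnion_finset (pairwiseDisjoint_cylSet_of_length_eq hA)
          fun y _ => measurableSet_cylSet y).symm
    _ ≤ μ S := measure_mono (Set.iUnion₂_subset hS)

lemma length_of_mem_GN {ν : List Bool → List Bool} {G : Finset (List Bool)} {N : ℕ}
    {y : List Bool} (hy : y ∈ GN ν G N) : y.length = N := by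
  obtain ⟨⟨f, -, rfl⟩, -⟩ := Finset.mem_filter.mp hy |>.imp_left Finset.mem_image.mp
  simp

lemma cylSet_subset_SG {ν : List Bool → List Bool} {G : Finset (List Bool)} {y : List Bool}
    (hy : ∃ x ∈ G, x <+: ν y) : cylSet y ⊆ SG ν G := fun α hα =>
  ⟨y.length, by rwa [firstN_length_eq_of_mem_cylSet hα]⟩

theorem stmt_4_general
    (μ : MeasureTheory.Measure (ℕ → Bool))
    (hμ : ∀ x : List Bool, μ (cylSet x) = (2 : ENNReal) ^ (-(x.length : ℤ)))
    (ν : List Bool → List Bool)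
    (G : Finset (List Bool)) :
    ∀ N : ℕ, ((GN ν G N).card : ENNReal) * (2 : ENNReal) ^ (-(N : ℤ)) ≤ μ (SG ν G) :=
  fun _ => card_mul_le_measure_of_cylSet_subset μ hμ (fun _ => length_of_mem_GN)
    fun _ hy => cylSet_subset_SG (Finset.mem_filter.mp hy).2

theorem stmt_4
    (μ : MeasureTheory.Measure (ℕ → Bool)) [MeasureTheory.IsProbabilityMeasure μ]
    (hμ : ∀ x : List Bool, μ (cylSet x) = (2 : ENNReal) ^ (-(x.length : ℤ)))
    (ν : List Bool → List Bool) (hν : StringMonotonic ν)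
    (G : Finset (List Bool)) (hG : PrefixFree (↑G : Set (List Bool))) :
    ∀ N : ℕ, ((GN ν G N).card : ENNReal) * (2 : ENNReal) ^ (-(N : ℤ)) ≤ μ (SG ν G) :=
  stmt_4_general μ hμ ν G
end

section
/- Let A be a prefix-free, left-total set of finite binary strings. If α and β are infinite binary sequences such that every finite prefix of α has both a total extension and a non-total extension with respect to A, and likewise every finite prefix of β has both a total extension and a non-total extension with respect to A, then α = β. -/
/-- `x` is total with respect to `A` if every infinite binary sequence extending `x`
has some finite prefix belonging to `A`. -/
def TotalFor (A : Set (List Bool)) (x : List Bool) : Prop :=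
  ∀ α : ℕ → Bool, (∀ i : Fin x.length, α i = x.get i) → ∃ n : ℕ, firstN α n ∈ A

/-- `x` is to the left of `y`: some `z ++ [false]` is a prefix of `x` while
`z ++ [true]` is a prefix of `y`. -/
def LeftOf (x y : List Bool) : Prop :=
  ∃ z : List Bool, z ++ [false] <+: x ∧ z ++ [true] <+: y

/-- `A` is left-total if every finite string to the left of some element of `A`
is total with respect to `A`. -/
def LeftTotal (A : Set (List Bool)) : Prop :=
  ∀ x y : List Bool, y ∈ A → LeftOf x y → TotalFor A x

/-!
By induction, `α` and `β` have the same prefixes. If they share the prefix `z` of length `n`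
but `α n = false` and `β n = true`, say, then some total string `e` extends `z ++ [true]`;
following `e` we meet an element `a ∈ A`. Either `a` is a prefix of `z`, or `z ++ [true]` is a prefix of `a`,
in which case every extension of `z ++ [false]` lies to the left of `a`. In both cases every
extension of `z ++ [false]` is total, contradicting the hypothesis on the prefix
`z ++ [false]` of `α`.
-/

section firstN

variable (α : ℕ → Bool)

@[simp]
lemma length_firstN (n : ℕ) : (firstN α n).length = n := by
  simp [firstN]

lemma firstN_succ (n : ℕ) : firstN α (n + 1) = firstN α n ++ [α n] := by
  rw [firstN, List.ofFn_succ']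
  simp [firstN]

variable {α}

lemma firstN_prefix_firstN {k m : ℕ} (h : k ≤ m) : firstN α k <+: firstN α m := by
  rw [List.prefix_iff_eq_take]
  apply List.ext_getElem (by simp [h])
  intro i _ _
  simp [firstN]

lemma firstN_length_eq_iff {x : List Bool} :
    firstN α x.length = x ↔ ∀ i : Fin x.length, α i = x.get i := by
  constructor
  · rintro hx ⟨i, hi⟩
    simpa [firstN] using List.getElem_of_eq hx (by simpa using hi)
  · intro hx
    apply List.ext_getElem (by simp)
    intro i hi _
    simpa [firstN] using hx ⟨i, by simpa using hi⟩

lemma firstN_length_of_prefix {x y : List Bool} (hx : firstN α x.length = x) (hy : y <+: x) :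
    firstN α y.length = y := by
  have hpre : firstN α y.length <+: x := hx ▸ firstN_prefix_firstN hy.length_le
  exact (List.prefix_of_prefix_length_le hpre hy (by simp)).eq_of_length (by simp)

lemma eq_of_forall_firstN_eq {β : ℕ → Bool} (h : ∀ n, firstN α n = firstN β n) : α = β := by
  funext n
  simpa [firstN_succ, h n] using h (n + 1)

lemma firstN_getD (x : List Bool) : firstN (fun i => x.getD i false) x.length = x :=
  firstN_length_eq_iff.mpr fun i => by simp

end firstN

section Total

variable {A : Set (List Bool)}

lemma totalFor_of_prefix_mem {a w : List Bool} (ha : a ∈ A) (haw : a <+: w) : TotalFor A w := by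
  intro δ hδ
  refine ⟨a.length, ?_⟩
  rwa [firstN_length_of_prefix (firstN_length_eq_iff.mpr hδ) haw]

lemma totalFor_left_of_totalFor_right (hlt : LeftTotal A) {z e w : List Bool}
    (he : z ++ [true] <+: e) (hte : TotalFor A e) (hw : z ++ [false] <+: w) : TotalFor A w := by
  set γ : ℕ → Bool := fun i => e.getD i false
  have hγe : firstN γ e.length = e := firstN_getD e
  obtain ⟨m, hm⟩ := hte γ (firstN_length_eq_iff.mp hγe)
  rcases le_or_gt m z.length with hmz | hzm
  · have hz : firstN γ z.length = z :=
      firstN_length_of_prefix hγe ((z.prefix_append _).trans he)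
    have haz : firstN γ m <+: z := hz ▸ firstN_prefix_firstN hmz
    exact totalFor_of_prefix_mem hm (haz.trans ((z.prefix_append _).trans hw))
  · have hzt : firstN γ (z ++ [true]).length = z ++ [true] := firstN_length_of_prefix hγe he
    have hpre : z ++ [true] <+: firstN γ m := hzt ▸ firstN_prefix_firstN (by simpa using hzm)
    exact hlt w _ hm ⟨z, hw, hpre⟩

end Total

theorem stmt_10_general
    (A : Set (List Bool)) (hlt : LeftTotal A)
    (α β : ℕ → Bool)
    (hα : ∀ n : ℕ, (∃ e : List Bool, firstN α n <+: e ∧ TotalFor A e) ∧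
      (∃ e : List Bool, firstN α n <+: e ∧ ¬TotalFor A e))
    (hβ : ∀ n : ℕ, (∃ e : List Bool, firstN β n <+: e ∧ TotalFor A e) ∧
      (∃ e : List Bool, firstN β n <+: e ∧ ¬TotalFor A e)) :
    α = β := by
  have hbranch : ∀ {γ δ : ℕ → Bool} {n : ℕ}, firstN γ n = firstN δ n → γ n = true →
      δ n = false → (∃ e, firstN γ (n + 1) <+: e ∧ TotalFor A e) →
      (∃ w, firstN δ (n + 1) <+: w ∧ ¬TotalFor A w) → False := by
    rintro γ δ n hz hγ hδ ⟨e, he, hte⟩ ⟨w, hw, hntw⟩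
    rw [firstN_succ, hγ, hz] at he
    rw [firstN_succ, hδ] at hw
    exact hntw (totalFor_left_of_totalFor_right hlt he hte hw)
  have hprefix : ∀ n, firstN α n = firstN β n := by
    intro n
    induction n with
    | zero => rfl
    | succ n ih =>
      rw [firstN_succ, firstN_succ, ih]
      cases ha : α n <;> cases hb : β n
      · rfl
      · exact (hbranch ih.symm hb ha (hβ _).1 (hα _).2).elim
      · exact (hbranch ih ha hb (hα _).1 (hβ _).2).elim
      · rfl
  exact eq_of_forall_firstN_eq hprefix

theorem stmt_10
    (A : Set (List Bool)) (hpf : PrefixFree A) (hlt : LeftTotal A)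
    (α β : ℕ → Bool)
    (hα : ∀ n : ℕ, (∃ e : List Bool, firstN α n <+: e ∧ TotalFor A e) ∧
      (∃ e : List Bool, firstN α n <+: e ∧ ¬TotalFor A e))
    (hβ : ∀ n : ℕ, (∃ e : List Bool, firstN β n <+: e ∧ TotalFor A e) ∧
      (∃ e : List Bool, firstN β n <+: e ∧ ¬TotalFor A e)) :
    α = β :=
  stmt_10_general A hlt α β hα hβ
end
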